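/- Let d ≥ 1 be an integer, let α, β be real numbers with α + β < −d, and let m, k ≥ 0 be integers. For every Schwartz function φ on ℝ^d the double integral ∫∫_{|x|≥1, |y|≥1} |x|^{α} (1 + log|x|)^{m} · |y|^{β} (1 + log|y|)^{k} · |φ(x+y)| dx dy is finite. (This integrability statement is the analytic core of the convolvability of the renormalized distributions R_d[r^λ log^m(r/l)] and R_d[r^μ log^k(r/l)] whenever Re(λ+μ) < −d.) -/

import Mathlib

/-!
Away from the logarithms the integrand is a product of powers of `1 + ‖x‖` and `1 + ‖y‖` with
a Schwartz function of `x + y`, and each factor `(1 + log t) ^ m` costs only an arbitrarily small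
power `t ^ ε`. Peetre's inequality `(1 + ‖y‖) ^ b ≤ (1 + ‖x‖) ^ b (1 + ‖x + y‖) ^ |b|` moves the
weight of `y` onto `x` and `x + y`; the rapid decay of `φ` absorbs `(1 + ‖x + y‖) ^ |b|`, and after
the shear `(x, y) ↦ (x, x + y)` the bound is a product of two integrable functions of the form
`(1 + ‖·‖) ^ (-r)` with `r > d`.
-/

open MeasureTheory Real SchwartzMap Module

lemma exists_one_add_log_pow_le_mul_rpow {ε : ℝ} (hε : 0 < ε) (m : ℕ) :
    ∃ A : ℝ, 0 ≤ A ∧ ∀ t : ℝ, 1 ≤ t → (1 + log t) ^ m ≤ A * t ^ ε := by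
  set δ : ℝ := ε / (m + 1)
  have hδ : 0 < δ := by positivity
  refine ⟨(1 + δ⁻¹) ^ m, by positivity, fun t ht => ?_⟩
  have ht0 : 0 < t := one_pos.trans_le ht
  have hlog : 1 + log t ≤ (1 + δ⁻¹) * t ^ δ := by
    have h1 : 1 ≤ t ^ δ := one_le_rpow ht hδ.le
    have h2 : log t ≤ t ^ δ / δ := log_le_rpow_div ht0.le hδ
    rw [div_eq_inv_mul] at h2
    nlinarith
  have hδm : δ * m ≤ ε := by
    rw [div_mul_eq_mul_div, div_le_iff₀ (by positivity)]
    nlinarith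
  calc (1 + log t) ^ m ≤ ((1 + δ⁻¹) * t ^ δ) ^ m := by
        gcongr
        linarith [log_nonneg ht]
    _ = (1 + δ⁻¹) ^ m * t ^ (δ * m) := by
        rw [mul_pow, rpow_mul ht0.le, rpow_natCast]
    _ ≤ (1 + δ⁻¹) ^ m * t ^ ε := by
        gcongr

lemma rpow_le_two_rpow_abs_mul_one_add_rpow {t : ℝ} (ht : 1 ≤ t) (r : ℝ) :
    t ^ r ≤ 2 ^ |r| * (1 + t) ^ r := by
  have ht0 : 0 < t := one_pos.trans_le ht
  rcases le_or_gt 0 r with hr | hr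
  · calc t ^ r ≤ (1 + t) ^ r := by gcongr; linarith
      _ ≤ 2 ^ |r| * (1 + t) ^ r :=
          le_mul_of_one_le_left (by positivity) (one_le_rpow (by norm_num) (abs_nonneg r))
  · calc t ^ r = 2 ^ (-r) * (2 * t) ^ r := by
          rw [mul_rpow zero_le_two ht0.le, ← mul_assoc, ← rpow_add two_pos]
          simp
      _ ≤ 2 ^ |r| * (1 + t) ^ r := by
          rw [abs_of_neg hr]
          exact mul_le_mul_of_nonneg_left
            (rpow_le_rpow_of_nonpos (by positivity) (by linarith) hr.le) (by positivity)

lemma exists_rpow_mul_one_add_log_pow_le {ε : ℝ} (hε : 0 < ε) (α : ℝ) (m : ℕ) :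
    ∃ A : ℝ, 0 ≤ A ∧ ∀ t : ℝ, 1 ≤ t →
      t ^ α * (1 + log t) ^ m ≤ A * (1 + t) ^ (α + ε) := by
  obtain ⟨A, hA0, hA⟩ := exists_one_add_log_pow_le_mul_rpow hε m
  refine ⟨A * 2 ^ |α + ε|, by positivity, fun t ht => ?_⟩
  have ht0 : 0 < t := one_pos.trans_le ht
  calc t ^ α * (1 + log t) ^ m ≤ t ^ α * (A * t ^ ε) := by gcongr; exact hA t ht
    _ = A * t ^ (α + ε) := by rw [rpow_add ht0]; ring
    _ ≤ A * (2 ^ |α + ε| * (1 + t) ^ (α + ε)) := by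
        gcongr; exact rpow_le_two_rpow_abs_mul_one_add_rpow ht _
    _ = A * 2 ^ |α + ε| * (1 + t) ^ (α + ε) := by ring

lemma one_add_norm_add_rpow_le {E : Type*} [SeminormedAddCommGroup E] (x y : E) (r : ℝ) :
    (1 + ‖x + y‖) ^ r ≤ (1 + ‖x‖) ^ r * (1 + ‖y‖) ^ |r| := by
  have hx : 0 < 1 + ‖x‖ := by positivity
  have hy : 0 < 1 + ‖y‖ := by positivity
  rcases le_or_gt 0 r with hr | hr
  · rw [abs_of_nonneg hr, ← mul_rpow hx.le hy.le]
    gcongr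
    nlinarith [norm_add_le x y, norm_nonneg x, norm_nonneg y]
  · have hxy : (1 + ‖x‖) / (1 + ‖y‖) ≤ 1 + ‖x + y‖ := by
      rw [div_le_iff₀ hy]
      have : ‖x‖ ≤ ‖x + y‖ + ‖y‖ := by simpa using norm_sub_le (x + y) y
      nlinarith [norm_nonneg (x + y), norm_nonneg y]
    calc (1 + ‖x + y‖) ^ r ≤ ((1 + ‖x‖) / (1 + ‖y‖)) ^ r :=
          rpow_le_rpow_of_nonpos (by positivity) hxy hr.le
      _ = (1 + ‖x‖) ^ r * (1 + ‖y‖) ^ |r| := by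
          rw [div_rpow hx.le hy.le, abs_of_neg hr, rpow_neg hy.le, div_eq_mul_inv]

lemma SchwartzMap.exists_norm_le_mul_one_add_norm_rpow_neg {E F : Type*}
    [NormedAddCommGroup E] [NormedSpace ℝ E] [NormedAddCommGroup F] [NormedSpace ℝ F]
    (f : 𝓢(E, F)) (N : ℕ) : ∃ C : ℝ, ∀ x, ‖f x‖ ≤ C * (1 + ‖x‖) ^ (-(N : ℝ)) := by
  refine ⟨2 ^ N * (Finset.Iic (N, 0)).sup (fun p => SchwartzMap.seminorm ℝ p.1 p.2) f,
    fun x => ?_⟩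
  rw [rpow_neg (by positivity), ← div_eq_mul_inv, le_div_iff₀ (by positivity), rpow_natCast,
    mul_comm]
  simpa using one_add_le_sup_seminorm_apply (𝕜 := ℝ) (m := (N, 0)) le_rfl le_rfl f x

section HaarMeasure

variable {E : Type*} [NormedAddCommGroup E] [NormedSpace ℝ E] [FiniteDimensional ℝ E]
  [MeasurableSpace E] [BorelSpace E] {μ ν : Measure E} [μ.IsAddHaarMeasure] [ν.IsAddHaarMeasure]

lemma integrable_one_add_norm_rpow_mul_one_add_norm_add_rpow {r s : ℝ}
    (hr : (finrank ℝ E : ℝ) < r) (hs : (finrank ℝ E : ℝ) < s) :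
    Integrable (fun q : E × E => (1 + ‖q.1‖) ^ (-r) * (1 + ‖q.1 + q.2‖) ^ (-s)) (μ.prod ν) := by
  have hprod := (integrable_one_add_norm (μ := μ) hr).mul_prod (integrable_one_add_norm (μ := ν) hs)
  exact ((measurePreserving_prod_add μ ν).integrable_comp hprod.aestronglyMeasurable).2 hprod

lemma SchwartzMap.integrable_one_add_norm_rpow_mul_one_add_norm_rpow_mul_norm_add
    {F : Type*} [NormedAddCommGroup F] [NormedSpace ℝ F] {a b : ℝ}
    (hab : a + b < -(finrank ℝ E : ℝ)) (f : 𝓢(E, F)) :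
    Integrable (fun q : E × E => (1 + ‖q.1‖) ^ a * (1 + ‖q.2‖) ^ b * ‖f (q.1 + q.2)‖)
      (μ.prod ν) := by
  obtain ⟨N, hN⟩ := exists_nat_gt ((finrank ℝ E : ℝ) + |b|)
  obtain ⟨C, hC⟩ := f.exists_norm_le_mul_one_add_norm_rpow_neg N
  have hkernel := (integrable_one_add_norm_rpow_mul_one_add_norm_add_rpow (μ := μ) (ν := ν)
    (r := -(a + b)) (s := N - |b|) (by linarith) (by linarith)).const_mul C
  refine hkernel.mono' (by fun_prop) (Filter.Eventually.of_forall fun q => ?_)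
  have hpeetre : (1 + ‖q.2‖) ^ b ≤ (1 + ‖q.1‖) ^ b * (1 + ‖q.1 + q.2‖) ^ |b| := by
    simpa using one_add_norm_add_rpow_le (-q.1) (q.1 + q.2) b
  have h1 : 0 < 1 + ‖q.1‖ := by positivity
  have h2 : 0 < 1 + ‖q.1 + q.2‖ := by positivity
  rw [norm_of_nonneg (by positivity)]
  calc (1 + ‖q.1‖) ^ a * (1 + ‖q.2‖) ^ b * ‖f (q.1 + q.2)‖
      ≤ (1 + ‖q.1‖) ^ a * ((1 + ‖q.1‖) ^ b * (1 + ‖q.1 + q.2‖) ^ |b|) *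
          (C * (1 + ‖q.1 + q.2‖) ^ (-(N : ℝ))) := by
        gcongr
        exact hC _
    _ = C * ((1 + ‖q.1‖) ^ (-(-(a + b))) * (1 + ‖q.1 + q.2‖) ^ (-(N - |b|))) := by
        rw [neg_neg, neg_sub, rpow_add h1, sub_eq_add_neg, rpow_add h2]
        ring

end HaarMeasure

theorem stmt_15_general (d : ℕ) (α β : ℝ) (h : α + β < -(d : ℝ)) (m k : ℕ)
    (φ : SchwartzMap (EuclideanSpace ℝ (Fin d)) ℝ) :
    IntegrableOn
      (fun q : EuclideanSpace ℝ (Fin d) × EuclideanSpace ℝ (Fin d) =>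
        ‖q.1‖ ^ α * (1 + Real.log ‖q.1‖) ^ m * (‖q.2‖ ^ β * (1 + Real.log ‖q.2‖) ^ k) *
          |φ (q.1 + q.2)|)
      {q : EuclideanSpace ℝ (Fin d) × EuclideanSpace ℝ (Fin d) |
        1 ≤ ‖q.1‖ ∧ 1 ≤ ‖q.2‖} := by
  obtain ⟨ε, hε, hsum⟩ : ∃ ε : ℝ, 0 < ε ∧ α + ε + (β + ε) < -d :=
    ⟨(-d - (α + β)) / 4, by linarith, by linarith⟩
  obtain ⟨A, hA0, hA⟩ := exists_rpow_mul_one_add_log_pow_le hε α m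
  obtain ⟨B, hB0, hB⟩ := exists_rpow_mul_one_add_log_pow_le hε β k
  have hdom := (φ.integrable_one_add_norm_rpow_mul_one_add_norm_rpow_mul_norm_add
    (μ := volume) (ν := volume) (a := α + ε) (b := β + ε)
    (by rwa [finrank_euclideanSpace_fin])).const_mul (A * B)
  have hS : MeasurableSet {q : EuclideanSpace ℝ (Fin d) × EuclideanSpace ℝ (Fin d) |
      1 ≤ ‖q.1‖ ∧ 1 ≤ ‖q.2‖} :=
    (measurableSet_le measurable_const measurable_fst.norm).inter
      (measurableSet_le measurable_const measurable_snd.norm)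
  refine hdom.integrableOn.mono' (by fun_prop) ((ae_restrict_iff' hS).2
    (Filter.Eventually.of_forall fun q ⟨hx, hy⟩ => ?_))
  have hx0 : 0 ≤ 1 + log ‖q.1‖ := by linarith [log_nonneg hx]
  have hy0 : 0 ≤ 1 + log ‖q.2‖ := by linarith [log_nonneg hy]
  rw [norm_of_nonneg (by positivity), ← norm_eq_abs]
  calc _ ≤ A * (1 + ‖q.1‖) ^ (α + ε) * (B * (1 + ‖q.2‖) ^ (β + ε)) * ‖φ (q.1 + q.2)‖ := by
        gcongr ?_ * ?_ * _
        exacts [hA _ hx, hB _ hy]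
    _ = _ := by ring

/-- the analytic core of the convolvability of the renormalized
distributions `R_d[r^λ log^m(r/l)]` and `R_d[r^μ log^k(r/l)]` for `Re(λ+μ) < -d`:
for `α + β < -d`, the double integral
`∫∫_{|x|≥1,|y|≥1} |x|^α (1+log|x|)^m |y|^β (1+log|y|)^k |φ(x+y)| dx dy` is finite. -/
theorem stmt_15 (d : ℕ) (hd : 1 ≤ d) (α β : ℝ) (h : α + β < -(d : ℝ)) (m k : ℕ)
    (φ : SchwartzMap (EuclideanSpace ℝ (Fin d)) ℝ) :
    IntegrableOn
      (fun q : EuclideanSpace ℝ (Fin d) × EuclideanSpace ℝ (Fin d) =>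
        ‖q.1‖ ^ α * (1 + Real.log ‖q.1‖) ^ m * (‖q.2‖ ^ β * (1 + Real.log ‖q.2‖) ^ k) *
          |φ (q.1 + q.2)|)
      {q : EuclideanSpace ℝ (Fin d) × EuclideanSpace ℝ (Fin d) |
        1 ≤ ‖q.1‖ ∧ 1 ≤ ‖q.2‖} :=
  stmt_15_general d α β h m k φ
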